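/- arXiv:0909.0743 — 2 statements merged into one kernel-verified Lean document; each statement's English description precedes it below -/
import Mathlib

section
/- Let p be a prime and f ∈ KS_{p,2}. Then for every integer n ≥ 0 and every s ∈ ℤ_p: f(s) ≡ Σ_{ν=0}^n f(ν)·C(s,ν)·C(n−s, n−ν) (mod p^{n+1} ℤ_p), where the binomial polynomials are evaluated at s and at n−s in ℤ_p. -/
open Finset

/-- The forward difference operator `Δ_h^n` with increment `h ≥ 1`:
`Δ_h^n f(s) = ∑_{ν=0}^n (n choose ν)·(−1)^(n−ν)·f(s+νh)`. -/
noncomputable def deltaH (p : ℕ) [Fact p.Prime] (h : ℕ) (f : ℤ_[p] → ℤ_[p]) (n : ℕ)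
    (s : ℤ_[p]) : ℤ_[p] :=
  ∑ ν ∈ Finset.range (n + 1),
    (n.choose ν : ℤ_[p]) * (-1) ^ (n - ν) * f (s + (ν : ℤ_[p]) * (h : ℤ_[p]))

/-- The binomial polynomial `C(s,m) = s(s−1)⋯(s−m+1)/m!`, as a function `ℤ_[p] → ℤ_[p]`. -/
noncomputable def binomC (p : ℕ) [Fact p.Prime] (s : ℤ_[p]) (m : ℕ) : ℤ_[p] :=
  Ring.choose s m

/-- `f ∈ KS_{p,2}`: `f` is continuous and satisfies the Kummer type congruences
`Δ^n f(s) ∈ p^n ℤ_p` for all integers `n ≥ 0` and all `s ∈ ℤ_p`. -/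
def KS2 (p : ℕ) [Fact p.Prime] (f : ℤ_[p] → ℤ_[p]) : Prop :=
  Continuous f ∧ ∀ (n : ℕ) (s : ℤ_[p]), (p : ℤ_[p]) ^ n ∣ deltaH p 1 f n s

/-!
The sum on the right is the Newton interpolation polynomial `∑_{k ≤ n} C(s,k) Δ^k f(0)` of `f` at
the nodes `0, …, n`, rewritten in Lagrange form. At a natural number `s = m`, Newton's formula
`f(m) = ∑_k C(m,k) Δ^k f(0)` shows that the error consists of the terms with `k > n`, each divisible
by `p^(n+1)`. Since `f` is continuous and `ℕ` is dense in `ℤ_p`, the congruence holds for all `s`.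
-/

open fwdDiff

section fwdDiff

variable {R : Type*}

theorem fwdDiff_iter_one_eq_sum [Ring R] (f : R → R) (k : ℕ) (x : R) :
    Δ_[1] ^[k] f x = ∑ ν ∈ range (k + 1), (-1) ^ (k - ν) * k.choose ν * f (x + ν) := by
  simp [fwdDiff_iter_eq_sum_shift, zsmul_eq_mul]

theorem dvd_sub_sum_range_choose_mul_fwdDiff_iter_natCast [CommRing R] {f : R → R} {a : R} {n : ℕ}
    (h : ∀ k, n < k → a ∣ Δ_[1] ^[k] f 0) (m : ℕ) :
    a ∣ f m - ∑ k ∈ range (n + 1), m.choose k * Δ_[1] ^[k] f 0 := by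
  have hnewton : f m = ∑ k ∈ range (n + m + 1), m.choose k * Δ_[1] ^[k] f 0 := by
    rw [← sum_subset (range_subset_range.mpr (by omega : m + 1 ≤ n + m + 1)),
      ← zero_add (m : R), ← nsmul_one, shift_eq_sum_fwdDiff_iter (1 : R) f m 0]
    · simp only [nsmul_eq_mul]
    · intro k _ hk
      rw [Nat.choose_eq_zero_of_lt (by simpa using hk), Nat.cast_zero, zero_mul]
  rw [hnewton, ← sum_range_add_sum_Ico _ (by omega : n + 1 ≤ n + m + 1), add_sub_cancel_left]
  exact dvd_sum fun k hk => (h k (by simp at hk; omega)).mul_left _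

end fwdDiff

namespace Ring

variable {R : Type*} [CommRing R] [BinomialRing R]

theorem sum_range_neg_one_pow_mul_choose (r : R) (t : ℕ) :
    ∑ j ∈ range (t + 1), (-1) ^ j * choose r j = (-1) ^ t * choose (r - 1) t := by
  induction t with
  | zero => simp
  | succ t ih =>
    rw [sum_range_succ, ih, ← sub_add_cancel r 1, choose_succ_succ, add_sub_cancel_right]
    ring

theorem choose_mul_natCast_choose {k ν : ℕ} (r : R) (h : ν ≤ k) :
    choose r k * k.choose ν = choose r ν * choose (r - ν) (k - ν) := by
  rw [mul_comm, ← nsmul_eq_mul, choose_smul_choose r h]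

/-- The Lagrange basis polynomial for the nodes `0, …, n`, written in the Newton basis. -/
theorem sum_Ico_neg_one_pow_mul_choose_mul_choose (r : R) {ν n : ℕ} (h : ν ≤ n) :
    ∑ k ∈ Ico ν (n + 1), (-1) ^ (k - ν) * (choose r k * k.choose ν)
      = choose r ν * choose (n - r) (n - ν) := by
  have hterm : ∀ j, (-1) ^ (ν + j - ν) * (choose r (ν + j) * (ν + j).choose ν)
      = choose r ν * ((-1) ^ j * choose (r - ν) j) := by
    intro j
    rw [choose_mul_natCast_choose r (Nat.le_add_right ν j), Nat.add_sub_cancel_left]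
    ring
  have hreflect : (-1) ^ (n - ν) * choose (r - ν - 1) (n - ν) = choose (n - r) (n - ν) := by
    rw [← neg_sub r, choose_neg, Units.smul_def, Int.coe_negOnePow_natCast, zsmul_eq_mul,
      Int.cast_pow, Int.cast_neg, Int.cast_one, Nat.cast_sub h]
    congr 2
    ring
  rw [sum_Ico_eq_sum_range, Nat.sub_add_comm h]
  simp_rw [hterm, ← mul_sum, sum_range_neg_one_pow_mul_choose, hreflect]

theorem sum_range_choose_mul_fwdDiff_iter (f : R → R) (r : R) (n : ℕ) :
    ∑ k ∈ range (n + 1), choose r k * Δ_[1] ^[k] f 0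
      = ∑ ν ∈ range (n + 1), f ν * choose r ν * choose (n - r) (n - ν) := by
  simp_rw [fwdDiff_iter_one_eq_sum, zero_add, mul_sum, range_eq_Ico]
  rw [← sum_Ico_Ico_comm]
  refine sum_congr rfl fun ν hν => ?_
  rw [mul_assoc, ← sum_Ico_neg_one_pow_mul_choose_mul_choose r (by simp at hν; omega), mul_sum]
  refine sum_congr rfl fun k _ => ?_
  ring

end Ring

namespace PadicInt

variable {p : ℕ} [Fact p.Prime]

theorem isClosed_setOf_pow_dvd (k : ℕ) : IsClosed {x : ℤ_[p] | (p : ℤ_[p]) ^ k ∣ x} := by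
  simp_rw [← Ideal.mem_span_singleton, ← norm_le_pow_iff_mem_span_pow]
  exact isClosed_le continuous_norm continuous_const

theorem pow_dvd_of_forall_natCast {g : ℤ_[p] → ℤ_[p]} (hg : Continuous g) {k : ℕ}
    (h : ∀ m : ℕ, (p : ℤ_[p]) ^ k ∣ g m) (x : ℤ_[p]) : (p : ℤ_[p]) ^ k ∣ g x :=
  isClosed_property denseRange_natCast ((isClosed_setOf_pow_dvd k).preimage hg) h x

end PadicInt

theorem deltaH_one_eq_fwdDiff_iter (p : ℕ) [Fact p.Prime] (f : ℤ_[p] → ℤ_[p]) (n : ℕ)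
    (s : ℤ_[p]) : deltaH p 1 f n s = Δ_[1] ^[n] f s := by
  simp only [deltaH, fwdDiff_iter_one_eq_sum, Nat.cast_one, mul_one, mul_comm]

theorem stmt6 (p : ℕ) [Fact p.Prime] (f : ℤ_[p] → ℤ_[p]) (hf : KS2 p f) (n : ℕ) (s : ℤ_[p]) :
    (p : ℤ_[p]) ^ (n + 1) ∣
      f s - ∑ ν ∈ Finset.range (n + 1),
        f (ν : ℤ_[p]) * binomC p s ν * binomC p ((n : ℤ_[p]) - s) (n - ν) := by
  have htail : ∀ k, n < k → (p : ℤ_[p]) ^ (n + 1) ∣ Δ_[1] ^[k] f 0 := fun k hk =>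
    (pow_dvd_pow _ hk).trans (deltaH_one_eq_fwdDiff_iter p f k 0 ▸ hf.2 k 0)
  have hcont : Continuous fun x => f x - ∑ k ∈ range (n + 1), Ring.choose x k * Δ_[1] ^[k] f 0 :=
    hf.1.sub <| continuous_finsetSum _ fun k _ => (PadicInt.continuous_choose k).mul_const _
  have hnat (m : ℕ) := dvd_sub_sum_range_choose_mul_fwdDiff_iter_natCast htail m
  simp_rw [← Ring.choose_natCast (R := ℤ_[p])] at hnat
  simpa only [binomC, Ring.sum_range_choose_mul_fwdDiff_iter] using
    PadicInt.pow_dvd_of_forall_natCast hcont hnat s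
end

section
/- Let p be a prime, f ∈ KS_{p,2}, a ∈ ℤ_p and b a nonzero integer, and define g : ℤ_p → ℤ_p by g(s) = f(a + b·s). Then g ∈ KS_{p,2}, and moreover v_p( Δ^n g(s) ) ≥ n·(1 + v_p(b)) for all integers n ≥ 1 and all s ∈ ℤ_p. -/
open Finset

/-!
Precomposing with `s ↦ a + b s` turns `Δ_1` into `Δ_b`, so `Δ^n g(s) = Δ_b^n f(a + b s)`.
By Newton's formula `Δ_m = ∑_{k=1}^m (m choose k) Δ^k` for `m ≥ 1`, and
`v_p (m choose k) + k ≥ 1 + v_p(m)`, so every application of `Δ_m` gains a factor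
`p^(1 + v_p(m))` on top of the Kummer congruences of all orders; negative steps reduce to
positive ones through `Δ_{-m} F(x) = -Δ_m F(x - m)`.
-/

open Function fwdDiff

lemma deltaH_eq_fwdDiff_iter (p : ℕ) [Fact p.Prime] (h : ℕ) (f : ℤ_[p] → ℤ_[p]) (n : ℕ)
    (s : ℤ_[p]) : deltaH p h f n s = (Δ_[(h : ℤ_[p])])^[n] f s := by
  rw [fwdDiff_iter_eq_sum_shift, deltaH]
  refine Finset.sum_congr rfl fun k _ ↦ ?_
  rw [zsmul_eq_mul, nsmul_eq_mul]
  push_cast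
  ring

lemma fwdDiff_iter_comp_affine {R G : Type*} [CommRing R] [AddCommGroup G] (f : R → G)
    (a b h : R) (n : ℕ) (s : R) :
    (Δ_[h])^[n] (fun x ↦ f (a + b * x)) s = (Δ_[b * h])^[n] f (a + b * s) := by
  have hsemi : Semiconj (fun F : R → G ↦ fun x ↦ F (a + b * x)) Δ_[b * h] Δ_[h] := by
    intro F
    funext x
    simp only [fwdDiff, mul_add, add_assoc]
  exact congrFun ((hsemi.iterate_right n) f).symm s

lemma pow_succ_padicValNat_dvd_choose_mul_pow (p : ℕ) [hp : Fact p.Prime] {m k : ℕ}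
    (hk : 1 ≤ k) (hkm : k ≤ m) :
    p ^ (1 + padicValNat p m) ∣ m.choose k * p ^ k := by
  have hC : m.choose k ≠ 0 := (Nat.choose_pos hkm).ne'
  have hC' : (m - 1).choose (k - 1) ≠ 0 := (Nat.choose_pos (by omega)).ne'
  have hval : padicValNat p k + padicValNat p (m.choose k)
      = padicValNat p m + padicValNat p ((m - 1).choose (k - 1)) := by
    rw [← padicValNat.mul (by omega) hC, ← padicValNat.mul (by omega) hC']
    congr 1
    simpa [Nat.sub_add_cancel (hk.trans hkm), Nat.sub_add_cancel hk, mul_comm]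
      using (Nat.add_one_mul_choose_eq (m - 1) (k - 1)).symm
  have hvk : padicValNat p k < k :=
    (Nat.lt_pow_self hp.out.one_lt).trans_le (Nat.le_of_dvd (by omega) pow_padicValNat_dvd)
  have hpk : p ^ k ≠ 0 := pow_ne_zero _ hp.out.ne_zero
  rw [padicValNat_dvd_iff_le (mul_ne_zero hC hpk), padicValNat.mul hC hpk,
    padicValNat.prime_pow]
  omega

lemma fwdDiff_natCast_eq_sum {R G : Type*} [CommRing R] [AddCommGroup G] (m : ℕ) (F : R → G) :
    Δ_[(m : R)] F = ∑ k ∈ Finset.range m, m.choose (k + 1) • (Δ_[1])^[k + 1] F := by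
  funext s
  have newton := shift_eq_sum_fwdDiff_iter (1 : R) F m s
  rw [Finset.sum_range_succ', nsmul_one] at newton
  simp [fwdDiff, newton]

def KummerCongr {R : Type*} [CommRing R] (p c : ℕ) (F : R → R) : Prop :=
  ∀ j s, (p : R) ^ (j + c) ∣ (Δ_[1])^[j] F s

namespace KummerCongr

variable {R : Type*} [CommRing R] {p c : ℕ} {F : R → R}

lemma comp_add_const (hF : KummerCongr p c F) (t : R) : KummerCongr p c (fun x ↦ F (x + t)) :=
  fun j s ↦ by simpa only [fwdDiff_iter_comp_add] using hF j (s + t)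

lemma neg (hF : KummerCongr p c F) : KummerCongr p c (-F) := fun j s ↦ by
  rw [← neg_one_smul R F, fwdDiff_iter_const_smul, Pi.smul_apply, neg_one_smul]
  exact (hF j s).neg_right

lemma fwdDiff_natCast [Fact p.Prime] (hF : KummerCongr p c F) (m : ℕ) :
    KummerCongr p (c + 1 + padicValNat p m) (Δ_[(m : R)] F) := by
  intro j s
  rw [fwdDiff_natCast_eq_sum, fwdDiff_iter_finsetSum, Finset.sum_apply]
  refine Finset.dvd_sum fun k hk ↦ ?_
  rw [fwdDiff_iter_const_smul, Pi.smul_apply, ← iterate_add_apply, nsmul_eq_mul]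
  have hchoose :
      (p : R) ^ (1 + padicValNat p m) ∣ (m.choose (k + 1) : R) * (p : R) ^ (k + 1) := by
    exact_mod_cast Nat.cast_dvd_cast (α := R)
      (pow_succ_padicValNat_dvd_choose_mul_pow p (by omega) (Finset.mem_range.mp hk))
  calc (p : R) ^ (j + (c + 1 + padicValNat p m))
      = (p : R) ^ (1 + padicValNat p m) * (p : R) ^ (j + c) := by ring
    _ ∣ ((m.choose (k + 1) : R) * (p : R) ^ (k + 1)) * (p : R) ^ (j + c) :=
        mul_dvd_mul_right hchoose _
    _ = (m.choose (k + 1) : R) * (p : R) ^ (j + (k + 1) + c) := by ring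
    _ ∣ _ := mul_dvd_mul_left _ (hF _ s)

lemma fwdDiff_intCast [Fact p.Prime] (hF : KummerCongr p c F) (b : ℤ) :
    KummerCongr p (c + 1 + padicValInt p b) (Δ_[(b : R)] F) := by
  obtain ⟨m, rfl | rfl⟩ := Int.eq_nat_or_neg b
  · simpa [padicValInt] using hF.fwdDiff_natCast m
  · have hneg : Δ_[((-m : ℤ) : R)] F = -fun x ↦ Δ_[(m : R)] F (x + -m) := by
      funext x
      simp [fwdDiff]
    rw [hneg]
    simpa [padicValInt] using ((hF.fwdDiff_natCast m).comp_add_const _).neg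

lemma fwdDiff_intCast_iter [Fact p.Prime] (hF : KummerCongr p c F) (b : ℤ)
    (n : ℕ) : KummerCongr p (c + n * (1 + padicValInt p b)) ((Δ_[(b : R)])^[n] F) := by
  induction n with
  | zero => simpa using hF
  | succ n ih =>
    rw [iterate_succ_apply']
    have hc : c + (n + 1) * (1 + padicValInt p b) = c + n * (1 + padicValInt p b) + 1 +
        padicValInt p b := by ring
    rw [hc]
    exact ih.fwdDiff_intCast b

end KummerCongr

lemma KS2_iff_kummerCongr_zero (p : ℕ) [Fact p.Prime] (f : ℤ_[p] → ℤ_[p]) :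
    KS2 p f ↔ Continuous f ∧ KummerCongr p 0 f := by
  simp only [KS2, KummerCongr, deltaH_eq_fwdDiff_iter, Nat.cast_one, add_zero]

theorem stmt7_general (p : ℕ) [Fact p.Prime] (f : ℤ_[p] → ℤ_[p]) (hf : KS2 p f)
    (a : ℤ_[p]) (b : ℤ) (g : ℤ_[p] → ℤ_[p])
    (hg : ∀ s, g s = f (a + (b : ℤ_[p]) * s)) :
    KS2 p g ∧ ∀ n : ℕ, 1 ≤ n → ∀ s : ℤ_[p],
      (p : ℤ_[p]) ^ (n * (1 + padicValInt p b)) ∣ deltaH p 1 g n s := by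
  obtain ⟨hf_cont, hf_kummer⟩ := (KS2_iff_kummerCongr_zero p f).mp hf
  obtain rfl : g = fun s ↦ f (a + b * s) := funext hg
  have hdvd (n : ℕ) (s : ℤ_[p]) :
      (p : ℤ_[p]) ^ (n * (1 + padicValInt p b)) ∣ deltaH p 1 (fun s ↦ f (a + b * s)) n s := by
    rw [deltaH_eq_fwdDiff_iter, Nat.cast_one, fwdDiff_iter_comp_affine, mul_one]
    simpa using hf_kummer.fwdDiff_intCast_iter b n 0 (a + b * s)
  refine ⟨⟨by fun_prop, fun n s ↦ ?_⟩, fun n _ ↦ hdvd n⟩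
  exact (pow_dvd_pow _ (Nat.le_mul_of_pos_right n (by omega))).trans (hdvd n s)

theorem stmt7 (p : ℕ) [Fact p.Prime] (f : ℤ_[p] → ℤ_[p]) (hf : KS2 p f)
    (a : ℤ_[p]) (b : ℤ) (hb : b ≠ 0) (g : ℤ_[p] → ℤ_[p])
    (hg : ∀ s, g s = f (a + (b : ℤ_[p]) * s)) :
    KS2 p g ∧ ∀ n : ℕ, 1 ≤ n → ∀ s : ℤ_[p],
      (p : ℤ_[p]) ^ (n * (1 + padicValInt p b)) ∣ deltaH p 1 g n s :=
  stmt7_general p f hf a b g hg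
end
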